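/- Let r ∈ ℂ, F ∈ A_r(Γ,v) a holomorphic automorphic form, z₀ ∈ ℍ. Define Q_F(t) = ∫_{z₀}^{t̄} (z-t)^{r-2} F(z) dz for t ∈ ℍ⁻ (path in ℍ from z₀ to t̄, branch arg(z-t) ∈ (-π/2, 3π/2)). Then for every γ ∈ Γ, Q_F|_{v,2-r}(γ - 1) = ψ^{z₀}_{F,γ}, where ψ^{z₀}_{F,γ}(t) = ∫_{γ^{-1}z₀}^{z₀} (z-t)^{r-2} F(z) dz. -/

import Mathlib

open Complex

noncomputable def mdenom (g : Matrix.SpecialLinearGroup (Fin 2) ℝ) (z : ℂ) : ℂ :=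
  (g.1 1 0 : ℂ) * z + (g.1 1 1 : ℂ)

noncomputable def mact (g : Matrix.SpecialLinearGroup (Fin 2) ℝ) (z : ℂ) : ℂ :=
  ((g.1 0 0 : ℂ) * z + (g.1 0 1 : ℂ)) / mdenom g z

/-- Complex power with the branch `arg ∈ [-π, π)`. -/
noncomputable def cpowLHP (w s : ℂ) : ℂ :=
  if w.arg = Real.pi then Complex.exp (s * (Complex.log w - 2 * (Real.pi : ℂ) * Complex.I))
  else w ^ s

/-- The integral `∫_{w₁}^{w₂} (z - t)^(r-2) F z dz` along the straight segment. -/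
noncomputable def segInt (r : ℂ) (F : ℂ → ℂ) (w₁ w₂ t : ℂ) : ℂ :=
  ∫ s in (0:ℝ)..1,
    (w₂ - w₁) * ((w₁ + (s : ℂ) * (w₂ - w₁) - t) ^ (r - 2)) *
      F (w₁ + (s : ℂ) * (w₂ - w₁))

/-!
For `t` in the lower half-plane, `z ↦ (z - t) ^ (r - 2) * F z` is holomorphic on the upper
half-plane, which is convex and closed under taking corners of rectangles, so the wedge integrals
give it a primitive there and every `segInt` is a difference of values of a primitive.
From `γz - γt = (z - t) / ((cz + d)(ct + d))`, `d(γz) = dz / (cz + d)²` and the automorphy of `F`,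
the function `v(γ)⁻¹ (ct + d)^(r-2) G(γz)` is a primitive for `t` whenever `G` is one for `γt`;
`cpowLHP` is precisely the branch of `(ct + d)^(r-2)` for which
`(z - t)^(r-2) = (γz - γt)^(r-2) (cz + d)^(r-2) (ct + d)^(r-2)` holds.
Hence `Q_F|γ (t)` is the integral from `γ⁻¹z₀` to `t̄`, and subtracting `Q_F (t)` leaves the
integral from `γ⁻¹z₀` to `z₀`.
-/

section Moebius

open UpperHalfPlane

variable (γ : Matrix.SpecialLinearGroup (Fin 2) ℝ)

lemma mdenom_ne_zero {z : ℂ} (hz : z.im ≠ 0) : mdenom γ z ≠ 0 :=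
  denom_ne_zero_of_im γ hz

lemma mact_eq_coe_smul (z : ℍ) : mact γ z = ↑(γ • z) := by
  rw [coe_specialLinearGroup_apply]
  rfl

lemma im_mact_pos {z : ℂ} (hz : 0 < z.im) : 0 < (mact γ z).im := by
  simpa [mact_eq_coe_smul γ ⟨z, hz⟩] using (γ • (⟨z, hz⟩ : ℍ)).im_pos

lemma mact_mact_inv {z : ℂ} (hz : 0 < z.im) : mact γ (mact γ⁻¹ z) = z := by
  rw [mact_eq_coe_smul γ⁻¹ ⟨z, hz⟩, mact_eq_coe_smul γ, smul_inv_smul]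

lemma mact_conj (z : ℂ) : mact γ (starRingEnd ℂ z) = starRingEnd ℂ (mact γ z) := by
  simp [mact, mdenom]

lemma im_mact_neg {t : ℂ} (ht : t.im < 0) : (mact γ t).im < 0 := by
  have := im_mact_pos γ (z := starRingEnd ℂ t) (by simpa using ht)
  rw [mact_conj, Complex.conj_im] at this
  linarith

lemma det_ofReal : (γ.1 0 0 : ℂ) * γ.1 1 1 - γ.1 0 1 * γ.1 1 0 = 1 := by
  exact_mod_cast (Matrix.det_fin_two γ.1).symm.trans γ.2

lemma mact_sub_mact {z w : ℂ} (hz : z.im ≠ 0) (hw : w.im ≠ 0) :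
    mact γ z - mact γ w = (z - w) / (mdenom γ z * mdenom γ w) := by
  rw [mact, mact, div_sub_div _ _ (mdenom_ne_zero γ hz) (mdenom_ne_zero γ hw)]
  congr 1
  simp only [mdenom]
  linear_combination (z - w) * det_ofReal γ

lemma hasDerivAt_mact {z : ℂ} (hz : z.im ≠ 0) :
    HasDerivAt (mact γ) (mdenom γ z ^ 2)⁻¹ z := by
  have hB := mdenom_ne_zero γ hz
  have hnum := ((hasDerivAt_id z).const_mul (γ.1 0 0 : ℂ)).add_const (γ.1 0 1 : ℂ)
  have hden := ((hasDerivAt_id z).const_mul (γ.1 1 0 : ℂ)).add_const (γ.1 1 1 : ℂ)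
  refine (hnum.div hden hB).congr_deriv ?_
  simp only [mdenom, id] at hB ⊢
  field_simp
  linear_combination det_ofReal γ

end Moebius

section Branch

open Real

lemma mul_cpow_of_arg_add_mem {x y : ℂ} (hx : x ≠ 0) (hy : y ≠ 0)
    (h : arg x + arg y ∈ Set.Ioc (-π) π) (s : ℂ) : (x * y) ^ s = x ^ s * y ^ s := by
  rw [cpow_def_of_ne_zero (mul_ne_zero hx hy), cpow_def_of_ne_zero hx, cpow_def_of_ne_zero hy,
    (log_mul_eq_add_log_iff hx hy).mpr h, add_mul, Complex.exp_add]

lemma mul_cpow_of_im_pos {x y : ℂ} (hx : 0 < x.im) (hxy : 0 < (x * y).im) (s : ℂ) :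
    (x * y) ^ s = x ^ s * y ^ s := by
  have hx₀ : x ≠ 0 := by rintro rfl; simp at hx
  have hy₀ : y ≠ 0 := by rintro rfl; simp at hxy
  refine mul_cpow_of_arg_add_mem hx₀ hy₀ ⟨?_, not_lt.mp fun h => ?_⟩ s
  · linarith [arg_nonneg_iff.mpr hx.le, neg_pi_lt_arg y]
  · have hwrap : arg (x * y) = arg x + arg y - 2 * π := by
      have hlt : arg x + arg y ≤ 3 * π := by linarith [arg_le_pi x, arg_le_pi y]
      rw [← arg_coe_angle_toReal_eq_arg, arg_mul_coe_angle hx₀ hy₀, ← Real.Angle.coe_add,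
        Real.Angle.toReal_coe_eq_self_sub_two_pi_iff.mpr ⟨h, hlt⟩]
    have hx₁ : arg x < π := arg_lt_pi_iff.mpr (Or.inr hx.ne')
    have : arg (x * y) < 0 := by rw [hwrap]; linarith [arg_le_pi y]
    exact (arg_neg_iff.mp this).not_gt hxy

lemma mul_cpow_of_im_mul_im_neg {x y : ℂ} (hxy : x.im * y.im < 0) (s : ℂ) :
    (x * y) ^ s = x ^ s * y ^ s := by
  have hx₀ : x ≠ 0 := by rintro rfl; simp at hxy
  have hy₀ : y ≠ 0 := by rintro rfl; simp at hxy
  refine mul_cpow_of_arg_add_mem hx₀ hy₀ ?_ s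
  rcases mul_neg_iff.mp hxy with ⟨hx, hy⟩ | ⟨hx, hy⟩
  · have := arg_neg_iff.mpr hy
    exact ⟨by linarith [arg_nonneg_iff.mpr hx.le, neg_pi_lt_arg y], by linarith [arg_le_pi x]⟩
  · have := arg_neg_iff.mpr hx
    exact ⟨by linarith [arg_nonneg_iff.mpr hy.le, neg_pi_lt_arg x], by linarith [arg_le_pi y]⟩

lemma cpowLHP_of_arg_ne_pi {x : ℂ} (hx : arg x ≠ π) (s : ℂ) : cpowLHP x s = x ^ s :=
  if_neg hx

lemma cpow_mul_cpowLHP_of_neg {d : ℝ} (hd : d < 0) (s : ℂ) :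
    (d : ℂ) ^ s * cpowLHP d s = ((d : ℂ) * d) ^ s := by
  have hd₀ : (d : ℂ) ≠ 0 := by exact_mod_cast hd.ne
  have harg : arg (d : ℂ) = π := arg_ofReal_of_neg hd
  have hlog : log (d : ℂ) = Real.log ‖(d : ℂ)‖ + π * I := by rw [Complex.log, harg]
  have hlog_sq : log ((d : ℂ) * d) = 2 * Real.log ‖(d : ℂ)‖ := by
    have : arg ((d : ℂ) * d) = 0 := by exact_mod_cast arg_ofReal_of_nonneg (mul_self_nonneg d)
    have hnorm : ‖(d : ℂ)‖ ≠ 0 := norm_ne_zero_iff.mpr hd₀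
    rw [Complex.log, this, norm_mul, Real.log_mul hnorm hnorm]
    push_cast
    ring
  rw [cpowLHP, if_pos harg, cpow_def_of_ne_zero hd₀, cpow_def_of_ne_zero (mul_ne_zero hd₀ hd₀),
    ← Complex.exp_add, hlog, hlog_sq]
  ring_nf

lemma mdenom_mul_mdenom_cpow (γ : Matrix.SpecialLinearGroup (Fin 2) ℝ) {w t : ℂ}
    (hw : 0 < w.im) (ht : t.im < 0) (s : ℂ) :
    (mdenom γ w * mdenom γ t) ^ s = mdenom γ w ^ s * cpowLHP (mdenom γ t) s := by
  by_cases hc : γ.1 1 0 = 0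
  · have hd : γ.1 1 1 ≠ 0 := fun hd => by simpa [hc, hd] using det_ofReal γ
    have hw' : mdenom γ w = γ.1 1 1 := by simp [mdenom, hc]
    have ht' : mdenom γ t = γ.1 1 1 := by simp [mdenom, hc]
    rw [hw', ht']
    rcases hd.lt_or_gt with hneg | hpos
    · exact (cpow_mul_cpowLHP_of_neg hneg s).symm
    · rw [cpowLHP_of_arg_ne_pi (by rw [arg_ofReal_of_nonneg hpos.le]; exact pi_pos.ne),
        mul_cpow_ofReal_nonneg hpos.le hpos.le]
  · have him : (mdenom γ w).im * (mdenom γ t).im < 0 := by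
      simp only [mdenom, add_im, mul_im, ofReal_re, ofReal_im, zero_mul, add_zero]
      nlinarith [mul_self_pos.mpr hc, mul_neg_of_pos_of_neg hw ht]
    have hC : arg (mdenom γ t) ≠ π := fun h => by
      rw [arg_eq_pi_iff] at h
      simp [h.2] at him
    rw [cpowLHP_of_arg_ne_pi hC, mul_cpow_of_im_mul_im_neg him]

lemma sub_cpow_eq_mact_sub_cpow_mul (γ : Matrix.SpecialLinearGroup (Fin 2) ℝ) {w t : ℂ}
    (hw : 0 < w.im) (ht : t.im < 0) (s : ℂ) :
    (w - t) ^ s = (mact γ w - mact γ t) ^ s * (mdenom γ w ^ s * cpowLHP (mdenom γ t) s) := by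
  have hprod : w - t = (mact γ w - mact γ t) * (mdenom γ w * mdenom γ t) := by
    rw [mact_sub_mact γ hw.ne' ht.ne, div_mul_cancel₀ _
      (mul_ne_zero (mdenom_ne_zero γ hw.ne') (mdenom_ne_zero γ ht.ne))]
  have hD : 0 < (mact γ w - mact γ t).im := by
    rw [sub_im]; linarith [im_mact_pos γ hw, im_mact_neg γ ht]
  rw [hprod, mul_cpow_of_im_pos hD (by rw [← hprod, sub_im]; linarith),
    mdenom_mul_mdenom_cpow γ hw ht]

end Branch

section Primitive

open Set MeasureTheory

variable {E : Type*} [NormedAddCommGroup E] {f : ℂ → E}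

lemma intervalIntegrable_horizontal_of_im_pos (hf : ContinuousOn f {z | 0 < z.im}) {y : ℝ}
    (hy : 0 < y) (a b : ℝ) : IntervalIntegrable (fun x : ℝ => f (x + y * I)) volume a b :=
  (hf.comp (by fun_prop) fun x _ => by simpa using hy).intervalIntegrable

lemma intervalIntegrable_vertical_of_im_pos (hf : ContinuousOn f {z | 0 < z.im}) (x : ℝ)
    {a b : ℝ} (ha : 0 < a) (hb : 0 < b) :
    IntervalIntegrable (fun y : ℝ => f (x + y * I)) volume a b :=
  (hf.comp (by fun_prop) fun y hy => by simpa using (lt_min ha hb).trans_le hy.1).intervalIntegrable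

variable [NormedSpace ℂ E]

lemma wedgeIntegral_add_wedgeIntegral_of_im_pos (hf : DifferentiableOn ℂ f {z | 0 < z.im})
    {p z w : ℂ} (hp : 0 < p.im) (hz : 0 < z.im) (hw : 0 < w.im) :
    wedgeIntegral p z f + wedgeIntegral z w f = wedgeIntegral p w f := by
  -- The two wedges differ by the boundary of the rectangle spanned by these two corners.
  have hrect := integral_boundary_rect_eq_zero_of_differentiableOn f (z.re + p.im * I)
    (w.re + z.im * I) <| hf.mono fun ζ hζ => by
      simpa using (lt_min hp hz).trans_le (by simpa using hζ.2.1)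
  simp only [add_re, ofReal_re, mul_re, I_re, mul_zero, ofReal_im, I_im, mul_one, sub_self,
    add_zero, add_im, mul_im, zero_add] at hrect
  have hc := hf.continuousOn
  rw [wedgeIntegral, wedgeIntegral, wedgeIntegral,
    ← intervalIntegral.integral_add_adjacent_intervals
      (intervalIntegrable_horizontal_of_im_pos hc hp p.re z.re)
      (intervalIntegrable_horizontal_of_im_pos hc hp z.re w.re),
    ← intervalIntegral.integral_add_adjacent_intervals
      (intervalIntegrable_vertical_of_im_pos hc w.re hp hz)
      (intervalIntegrable_vertical_of_im_pos hc w.re hz hw), smul_add]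
  rw [← sub_eq_zero, ← neg_eq_zero, ← hrect]
  abel

theorem DifferentiableOn.isExactOn_im_pos [CompleteSpace E]
    (hf : DifferentiableOn ℂ f {z | 0 < z.im}) :
    IsExactOn f {z | 0 < z.im} := by
  refine ⟨fun w => wedgeIntegral I w f, fun z hz => ?_⟩
  have hball : Metric.ball z z.im ⊆ {w | 0 < w.im} := fun w hw => by
    have h := abs_im_le_norm (w - z)
    rw [sub_im] at h
    exact show 0 < w.im by linarith [neg_abs_le (w.im - z.im), mem_ball_iff_norm.mp hw]
  have hloc : HasDerivAt (fun w => wedgeIntegral z w f) (f z) z :=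
    (hf.mono hball).isConservativeOn.hasDerivAt_wedgeIntegral (hf.mono hball).continuousOn
      (Metric.mem_ball_self hz)
  refine (hloc.const_add (wedgeIntegral I z f)).congr_of_eventuallyEq ?_
  filter_upwards [(isOpen_lt continuous_const continuous_im).mem_nhds hz] with w hw
  exact (wedgeIntegral_add_wedgeIntegral_of_im_pos hf (by simp) hz hw).symm

end Primitive

open Set in
theorem integral_segment_eq_sub_of_hasDerivAt {U : Set ℂ} (hU : Convex ℝ U) {g G : ℂ → ℂ}
    (hg : ContinuousOn g U) (hG : ∀ z ∈ U, HasDerivAt G (g z) z) {a b : ℂ} (ha : a ∈ U)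
    (hb : b ∈ U) : ∫ s in (0:ℝ)..1, (b - a) * g (a + s * (b - a)) = G b - G a := by
  have hseg : ∀ s ∈ uIcc (0:ℝ) 1, a + s * (b - a) ∈ U := fun s hs => by
    simpa [real_smul] using hU.add_smul_sub_mem ha hb (by simpa using hs)
  have hpath (s : ℝ) : HasDerivAt (fun s : ℝ => a + s * (b - a)) (b - a) s := by
    simpa using ((hasDerivAt_id (s : ℂ)).comp_ofReal.mul_const (b - a)).const_add a
  have hderiv : ∀ s ∈ uIcc (0:ℝ) 1,
      HasDerivAt (fun s : ℝ => G (a + s * (b - a))) ((b - a) * g (a + s * (b - a))) s :=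
    fun s hs => (hG _ (hseg s hs)).scomp s (hpath s)
  rw [intervalIntegral.integral_eq_sub_of_hasDerivAt hderiv
    (continuousOn_const.mul (hg.comp (by fun_prop) hseg)).intervalIntegrable]
  simp

noncomputable def segIntegrand (r : ℂ) (F : ℂ → ℂ) (t z : ℂ) : ℂ := (z - t) ^ (r - 2) * F z

section SegmentIntegral

variable {r t : ℂ} {F : ℂ → ℂ}

lemma differentiableOn_segIntegrand (hF : DifferentiableOn ℂ F {z | 0 < z.im}) (ht : t.im < 0) :
    DifferentiableOn ℂ (segIntegrand r F t) {z | 0 < z.im} := fun z hz =>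
  have hslit : z - t ∈ slitPlane := Or.inr (by simp only [sub_im]; linarith [hz.out])
  (((differentiableAt_id.sub_const t).cpow_const hslit).differentiableWithinAt).mul (hF z hz)

lemma segInt_eq_sub (hF : DifferentiableOn ℂ F {z | 0 < z.im}) (ht : t.im < 0) {G : ℂ → ℂ}
    (hG : ∀ z ∈ {z : ℂ | 0 < z.im}, HasDerivAt G (segIntegrand r F t z) z) {w₁ w₂ : ℂ}
    (hw₁ : 0 < w₁.im) (hw₂ : 0 < w₂.im) : segInt r F w₁ w₂ t = G w₂ - G w₁ := by
  rw [segInt, ← integral_segment_eq_sub_of_hasDerivAt (convex_halfSpace_im_gt 0)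
    (differentiableOn_segIntegrand hF ht).continuousOn hG hw₁ hw₂]
  simp only [segIntegrand, mul_assoc]

lemma segInt_add_segInt (hF : DifferentiableOn ℂ F {z | 0 < z.im}) (ht : t.im < 0) {a b c : ℂ}
    (ha : 0 < a.im) (hb : 0 < b.im) (hc : 0 < c.im) :
    segInt r F a b t + segInt r F b c t = segInt r F a c t := by
  obtain ⟨G, hG⟩ := (differentiableOn_segIntegrand (r := r) hF ht).isExactOn_im_pos
  rw [segInt_eq_sub hF ht hG ha hb, segInt_eq_sub hF ht hG hb hc, segInt_eq_sub hF ht hG ha hc]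
  ring

variable (γ : Matrix.SpecialLinearGroup (Fin 2) ℝ) {κ : ℂ}
  (hauto : ∀ z : ℂ, 0 < z.im → F (mact γ z) = κ * mdenom γ z ^ r * F z)
include hauto

lemma segIntegrand_mact (hκ : κ ≠ 0) {w : ℂ} (hw : 0 < w.im) (ht : t.im < 0) :
    κ⁻¹ * cpowLHP (mdenom γ t) (r - 2) *
        (segIntegrand r F (mact γ t) (mact γ w) * (mdenom γ w ^ 2)⁻¹) =
      segIntegrand r F t w := by
  have hB := mdenom_ne_zero γ hw.ne'
  rw [segIntegrand, segIntegrand, hauto w hw, sub_cpow_eq_mact_sub_cpow_mul γ hw ht,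
    cpow_sub _ _ hB, cpow_two]
  field_simp

theorem segInt_mact (hκ : κ ≠ 0) (hF : DifferentiableOn ℂ F {z | 0 < z.im}) {w₁ w₂ : ℂ}
    (hw₁ : 0 < w₁.im) (hw₂ : 0 < w₂.im) (ht : t.im < 0) :
    κ⁻¹ * cpowLHP (mdenom γ t) (r - 2) * segInt r F (mact γ w₁) (mact γ w₂) (mact γ t) =
      segInt r F w₁ w₂ t := by
  have hγt := im_mact_neg γ ht
  obtain ⟨G, hG⟩ := (differentiableOn_segIntegrand (r := r) hF hγt).isExactOn_im_pos
  have hH : ∀ w ∈ {z : ℂ | 0 < z.im}, HasDerivAt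
      (fun w => κ⁻¹ * cpowLHP (mdenom γ t) (r - 2) * G (mact γ w)) (segIntegrand r F t w) w :=
    fun w hw => by
      rw [← segIntegrand_mact γ hauto hκ hw ht]
      exact ((hG _ (im_mact_pos γ hw)).comp w (hasDerivAt_mact γ hw.out.ne')).const_mul _
  rw [segInt_eq_sub hF hγt hG (im_mact_pos γ hw₁) (im_mact_pos γ hw₂),
    segInt_eq_sub hF ht hH hw₁ hw₂]
  ring

end SegmentIntegral

/-- with `Q_F t = ∫_{z₀}^{t̄} (z-t)^(r-2) F z dz` for `t` in the lower
half-plane, one has `Q_F|_{v,2-r}(γ - 1) = ψ^{z₀}_{F,γ}` for every `γ ∈ Γ`, where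
`ψ^{z₀}_{F,γ} t = ∫_{γ⁻¹z₀}^{z₀} (z-t)^(r-2) F z dz`. -/
theorem QF_coboundary_relation (r : ℂ)
    (Γ : Subgroup (Matrix.SpecialLinearGroup (Fin 2) ℝ))
    (v : Matrix.SpecialLinearGroup (Fin 2) ℝ → ℂ) (hv : ∀ γ ∈ Γ, v γ ≠ 0)
    (F : ℂ → ℂ) (hF : DifferentiableOn ℂ F {z : ℂ | 0 < z.im})
    (hauto : ∀ γ ∈ Γ, ∀ z : ℂ, 0 < z.im →
        F (mact γ z) = v γ * mdenom γ z ^ r * F z)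
    (z₀ : ℂ) (hz₀ : 0 < z₀.im) :
    ∀ γ ∈ Γ, ∀ t : ℂ, t.im < 0 →
      (v γ)⁻¹ * cpowLHP (mdenom γ t) (r - 2) *
          segInt r F z₀ (starRingEnd ℂ (mact γ t)) (mact γ t) -
        segInt r F z₀ (starRingEnd ℂ t) t =
      segInt r F (mact γ⁻¹ z₀) z₀ t := by
  intro γ hγ t ht
  have hq := im_mact_pos γ⁻¹ hz₀
  have ht' : 0 < (starRingEnd ℂ t).im := by simpa using ht
  have hchange := segInt_mact γ (hauto γ hγ) (hv γ hγ) hF hq ht' ht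
  rw [mact_mact_inv γ hz₀, mact_conj] at hchange
  rw [hchange, ← segInt_add_segInt hF ht hq hz₀ ht']
  ring
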